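/- Let f_n = 1/(β + n) with β avoiding nonpositive integers, and S_a^b(t) = ∑_{a ≤ i_1 ≤ ... ≤ i_t ≤ b} ∏_r f_{i_r} (with S_a^b(0) = 1). Then for integers 1 ≤ a ≤ b and t ≥ 0, S_{a-1}^{b+1}(t) = ∑_{u+v+w=t} f_{a-1}^u · S_a^b(v) · f_{b+1}^w. -/

import Mathlib

/-!
`S β a b t` is the complete homogeneous symmetric polynomial `h_t` evaluated at the weights
`f_a, …, f_b`. Cutting a weakly increasing sequence in `[a, b]` into its entries `≤ c` and its
entries `> c` gives `h_t[a, b] = ∑_{i + j = t} h_i[a, c] · h_j[c + 1, b]`, and on a singleton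
interval `h_t[c, c] = f_c ^ t`. Splitting `[a - 1, b + 1]` at `a - 1` and then `[a, b + 1]` at `b`
yields the identity.
-/

open scoped Classical

noncomputable section

/-- S_a^b(t) = ∑_{a ≤ i₁ ≤ ... ≤ i_t ≤ b} ∏_r 1/(β + i_r), with S_a^b(0) = 1. -/
def S (β : ℂ) (a b t : ℕ) : ℂ :=
  ∑ f ∈ Finset.univ.filter
      (fun f : Fin t → {x // x ∈ Finset.Icc a b} => Monotone f),
    ∏ r, (β + ((f r : ℕ) : ℂ))⁻¹

open Finset

def monotoneSeqs (a b t : ℕ) : Finset (Fin t → ℕ) :=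
  (Fintype.piFinset fun _ => Icc a b).filter Monotone

lemma mem_monotoneSeqs {a b t : ℕ} {f : Fin t → ℕ} :
    f ∈ monotoneSeqs a b t ↔ (∀ i, f i ∈ Icc a b) ∧ Monotone f := by
  simp only [monotoneSeqs, mem_filter, Fintype.mem_piFinset]

lemma mem_monotoneSeqs_succ {a b t : ℕ} {f : Fin (t + 1) → ℕ} :
    f ∈ monotoneSeqs a b (t + 1) ↔ f 0 ∈ Icc a b ∧ Fin.tail f ∈ monotoneSeqs (f 0) b t := by
  simp only [mem_monotoneSeqs, mem_Icc]
  constructor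
  · rintro ⟨hrange, hmono⟩
    exact ⟨hrange 0, fun i => ⟨hmono (Fin.zero_le _), (hrange i.succ).2⟩,
      fun i j hij => hmono (Fin.succ_le_succ_iff.2 hij)⟩
  · rintro ⟨⟨ha, hb⟩, htail, hmono⟩
    refine ⟨Fin.cases ⟨ha, hb⟩ fun i => ⟨ha.trans (htail i).1, (htail i).2⟩, ?_⟩
    intro i j hij
    induction j using Fin.cases with
    | zero => rw [Fin.le_zero_iff.1 hij]
    | succ j =>
      induction i using Fin.cases with
      | zero => exact (htail j).1
      | succ i => exact hmono (Fin.succ_le_succ_iff.1 hij)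

section CompleteHomogeneous

variable {R : Type*} [CommSemiring R] (w : ℕ → R)

def completeHomogeneous (a b t : ℕ) : R :=
  ∑ f ∈ monotoneSeqs a b t, ∏ r, w (f r)

@[simp]
lemma completeHomogeneous_zero (a b : ℕ) : completeHomogeneous w a b 0 = 1 := by
  have : monotoneSeqs a b 0 = {Fin.elim0} := by
    ext f
    simp only [mem_monotoneSeqs, IsEmpty.forall_iff, true_and, mem_singleton,
      Subsingleton.elim f Fin.elim0, iff_true]
    exact fun i => i.elim0
  simp [completeHomogeneous, this]

lemma completeHomogeneous_succ (a b t : ℕ) :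
    completeHomogeneous w a b (t + 1) = ∑ k ∈ Icc a b, w k * completeHomogeneous w k b t := by
  simp only [completeHomogeneous, mul_sum, sum_sigma']
  refine sum_nbij' (fun f => ⟨f 0, Fin.tail f⟩) (fun p => Fin.cons p.1 p.2) ?_ ?_ ?_ ?_ ?_
  · intro f hf
    simpa [mem_monotoneSeqs_succ] using hf
  · rintro ⟨k, g⟩ hg
    simpa [mem_monotoneSeqs_succ] using hg
  · intro f _
    exact Fin.cons_self_tail f
  · rintro ⟨k, g⟩ _
    rfl
  · intro f _
    exact Fin.prod_univ_succ _

lemma completeHomogeneous_self (c t : ℕ) : completeHomogeneous w c c t = w c ^ t := by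
  induction t with
  | zero => simp
  | succ t ih => rw [completeHomogeneous_succ, Icc_self, sum_singleton, ih, pow_succ']

lemma completeHomogeneous_eq_sum_antidiagonal {a b c : ℕ} (hac : a ≤ c + 1) (hcb : c ≤ b)
    (t : ℕ) :
    completeHomogeneous w a b t = ∑ p ∈ antidiagonal t,
      completeHomogeneous w a c p.1 * completeHomogeneous w (c + 1) b p.2 := by
  induction t generalizing a with
  | zero => simp
  | succ t ih =>
    -- sequences whose first entry is `≤ c`; the others are exactly those in `[c + 1, b]`
    have hlow : ∑ k ∈ Icc a c, w k * completeHomogeneous w k b t = ∑ p ∈ antidiagonal t,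
        completeHomogeneous w a c (p.1 + 1) * completeHomogeneous w (c + 1) b p.2 := by
      calc ∑ k ∈ Icc a c, w k * completeHomogeneous w k b t
          = ∑ k ∈ Icc a c, ∑ p ∈ antidiagonal t,
              w k * completeHomogeneous w k c p.1 * completeHomogeneous w (c + 1) b p.2 := by
            refine sum_congr rfl fun k hk => ?_
            rw [ih (by linarith [(mem_Icc.1 hk).2]), mul_sum]
            simp only [mul_assoc]
        _ = _ := by
            rw [sum_comm]
            simp only [completeHomogeneous_succ, sum_mul]
    rw [Nat.sum_antidiagonal_succ, completeHomogeneous_zero, one_mul,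
      completeHomogeneous_succ, completeHomogeneous_succ, ← hlow, add_comm,
      ← Ico_add_one_right_eq_Icc, ← Ico_add_one_right_eq_Icc, ← Ico_add_one_right_eq_Icc,
      sum_Ico_consecutive _ hac (by omega)]

end CompleteHomogeneous

lemma S_eq_completeHomogeneous (β : ℂ) (a b t : ℕ) :
    S β a b t = completeHomogeneous (fun n => (β + n)⁻¹) a b t := by
  refine sum_nbij (fun f r => (f r : ℕ)) ?_ ?_ ?_ fun _ _ => rfl
  · intro f hf
    exact mem_monotoneSeqs.2 ⟨fun r => (f r).2, fun i j hij => (mem_filter.1 hf).2 hij⟩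
  · intro f _ g _ hfg
    funext r
    exact Subtype.ext (congrFun hfg r)
  · intro g hg
    obtain ⟨hrange, hmono⟩ := mem_monotoneSeqs.1 hg
    exact ⟨fun r => ⟨g r, hrange r⟩,
      mem_filter.2 ⟨mem_univ _, fun i j hij => Subtype.mk_le_mk.2 (hmono hij)⟩, rfl⟩

theorem S_extend_general
    (β : ℂ) (a b t : ℕ) (ha : 1 ≤ a) (hab : a ≤ b) :
    S β (a - 1) (b + 1) t
      = ∑ p ∈ Finset.HasAntidiagonal.antidiagonal t, ∑ r ∈ Finset.HasAntidiagonal.antidiagonal p.2,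
          (β + ((a - 1 : ℕ) : ℂ))⁻¹ ^ p.1 * S β a b r.1 * (β + ((b + 1 : ℕ) : ℂ))⁻¹ ^ r.2 := by
  simp only [S_eq_completeHomogeneous]
  rw [completeHomogeneous_eq_sum_antidiagonal _ (c := a - 1) (by omega) (by omega),
    Nat.sub_add_cancel ha]
  refine sum_congr rfl fun p _ => ?_
  rw [completeHomogeneous_eq_sum_antidiagonal _ (b := b + 1) (c := b) (by omega) b.le_succ,
    mul_sum]
  refine sum_congr rfl fun r _ => ?_
  rw [completeHomogeneous_self, completeHomogeneous_self, mul_assoc]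

/-- For 1 ≤ a ≤ b and t ≥ 0,
    S_{a-1}^{b+1}(t) = ∑_{u+v+w=t} f_{a-1}^u S_a^b(v) f_{b+1}^w,
    where f_n = 1/(β+n). -/
theorem S_extend
    (β : ℂ) (hβ : ∀ k : ℕ, β ≠ -(k : ℂ)) (a b t : ℕ) (ha : 1 ≤ a) (hab : a ≤ b) :
    S β (a - 1) (b + 1) t
      = ∑ p ∈ Finset.HasAntidiagonal.antidiagonal t, ∑ r ∈ Finset.HasAntidiagonal.antidiagonal p.2,
          (β + ((a - 1 : ℕ) : ℂ))⁻¹ ^ p.1 * S β a b r.1 * (β + ((b + 1 : ℕ) : ℂ))⁻¹ ^ r.2 :=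
  S_extend_general β a b t ha hab

end
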